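/- Let (Ω, 𝓕, ℙ) be a probability space, 𝒢 ⊆ 𝓕 a sub-σ-algebra, and X, Y : Ω → ℝ^d random vectors whose components are square-integrable, with X measurable with respect to 𝒢. Let M be a real d×d matrix such that the (componentwise) conditional expectation satisfies E[Y | 𝒢] = Mᵀ X almost surely. Then Mᵀ E[XXᵀ] M ⪯ E[YYᵀ] in the Loewner order; consequently, if E[XXᵀ] and E[YYᵀ] are positive definite, then ‖(E[XXᵀ])^{1/2} M (E[YYᵀ])^{-1/2}‖ ≤ 1. -/

import Mathlib

open Matrix MeasureTheory

/-- The spectral norm (ℓ²→ℓ² operator norm) of a real square matrix. -/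
noncomputable def specNorm {d : ℕ} (A : Matrix (Fin d) (Fin d) ℝ) : ℝ :=
  ‖Matrix.toEuclideanCLM (𝕜 := ℝ) A‖

open Classical in
/-- The positive semidefinite square root of a positive semidefinite real matrix
(junk value `0` on matrices that are not positive semidefinite). -/
noncomputable def msqrt {d : ℕ} (A : Matrix (Fin d) (Fin d) ℝ) : Matrix (Fin d) (Fin d) ℝ :=
  if h : A.PosSemidef then
    (h.1.eigenvectorUnitary : Matrix (Fin d) (Fin d) ℝ) *
      diagonal (fun i => Real.sqrt (h.1.eigenvalues i)) *
      (star h.1.eigenvectorUnitary : Matrix (Fin d) (Fin d) ℝ)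
  else 0

/-! Put `W := Mᵀ X`, so that `W` is a version of `E[Y | 𝒢]` and `Mᵀ E[XXᵀ] M = E[WWᵀ]`.
In every direction `v`, conditional Jensen gives `E[(v ⬝ W)²] = E[E[v ⬝ Y | 𝒢]²] ≤ E[(v ⬝ Y)²]`,
which is the Loewner inequality. For the norm bound let `T := E[YYᵀ]^{1/2}` and
`A := E[XXᵀ]^{1/2} M T⁻¹`; then `1 - AᵀA = T⁻¹ (E[YYᵀ] - Mᵀ E[XXᵀ] M) T⁻¹ ⪰ 0`, so `‖A‖ ≤ 1`. -/

section SecondMoment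

variable {Ω ι κ : Type*}

noncomputable def secondMoment [MeasurableSpace Ω] (μ : Measure Ω) (Z : Ω → ι → ℝ) : Matrix ι ι ℝ :=
  of fun i j => ∫ ω, Z ω i * Z ω j ∂μ

variable {m m0 : MeasurableSpace Ω} {μ : Measure[m0] Ω}

theorem secondMoment_isHermitian (Z : Ω → ι → ℝ) : (secondMoment μ Z).IsHermitian := by
  ext i j
  simp only [conjTranspose_apply, star_trivial, secondMoment, of_apply, mul_comm]

variable [Fintype ι]

theorem integral_dotProduct_mul_dotProduct {Z : Ω → ι → ℝ} (hZ : ∀ i, MemLp (Z · i) 2 μ)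
    (a b : ι → ℝ) :
    ∫ ω, (a ⬝ᵥ Z ω) * (b ⬝ᵥ Z ω) ∂μ = a ⬝ᵥ (secondMoment μ Z *ᵥ b) := by
  have hint : ∀ i j, Integrable (fun ω => a i * b j * (Z ω i * Z ω j)) μ :=
    fun i j => ((hZ i).integrable_mul (hZ j)).const_mul _
  calc ∫ ω, (a ⬝ᵥ Z ω) * (b ⬝ᵥ Z ω) ∂μ
      = ∫ ω, ∑ i, ∑ j, a i * b j * (Z ω i * Z ω j) ∂μ := by
        congr with ω
        simp only [dotProduct, Finset.sum_mul_sum]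
        exact Finset.sum_congr rfl fun i _ => Finset.sum_congr rfl fun j _ => by ring
    _ = ∑ i, ∑ j, a i * b j * ∫ ω, Z ω i * Z ω j ∂μ := by
        rw [integral_finsetSum _ fun i _ => integrable_finsetSum _ fun j _ => hint i j]
        simp_rw [integral_finsetSum _ fun j _ => hint _ j, integral_const_mul]
    _ = a ⬝ᵥ (secondMoment μ Z *ᵥ b) := by
        simp only [dotProduct, mulVec, secondMoment, of_apply, Finset.mul_sum]
        exact Finset.sum_congr rfl fun i _ => Finset.sum_congr rfl fun j _ => by ring

theorem dotProduct_secondMoment_mulVec_self {Z : Ω → ι → ℝ} (hZ : ∀ i, MemLp (Z · i) 2 μ)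
    (v : ι → ℝ) : v ⬝ᵥ (secondMoment μ Z *ᵥ v) = ∫ ω, (v ⬝ᵥ Z ω) ^ 2 ∂μ := by
  simp_rw [sq]
  exact (integral_dotProduct_mul_dotProduct hZ v v).symm

theorem secondMoment_mulVec [Fintype κ] {Z : Ω → ι → ℝ} (hZ : ∀ i, MemLp (Z · i) 2 μ)
    (A : Matrix κ ι ℝ) :
    secondMoment μ (fun ω => A *ᵥ Z ω) = A * secondMoment μ Z * Aᵀ := by
  ext i j
  rw [secondMoment, of_apply]
  simp only [mulVec]
  rw [integral_dotProduct_mul_dotProduct hZ, dotProduct_mulVec]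
  rfl

theorem integral_sq_condExp_le {f : Ω → ℝ} (hf : Integrable (fun ω => f ω ^ 2) μ) :
    ∫ ω, μ[f|m] ω ^ 2 ∂μ ≤ ∫ ω, f ω ^ 2 ∂μ := by
  simpa using integral_norm_condExp_rpow_le (m := m) (p := 2) one_le_two (f := f)
    (by simpa using hf)

theorem condExp_dotProduct {Y : Ω → ι → ℝ} (hY : ∀ i, Integrable (Y · i) μ) (v : ι → ℝ) :
    μ[fun ω => v ⬝ᵥ Y ω|m] =ᵐ[μ] fun ω => v ⬝ᵥ fun i => μ[(Y · i)|m] ω := by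
  have hlin : (fun ω => v ⬝ᵥ Y ω) = ∑ i, v i • (Y · i) := by
    ext ω
    simp [dotProduct, Finset.sum_apply]
  rw [hlin]
  filter_upwards [condExp_finsetSum (s := Finset.univ) (fun i _ => (hY i).smul (v i)) m,
    ae_all_iff.2 fun i => condExp_smul (m := m) (μ := μ) (v i) (Y · i)] with ω hsum hsmul
  simp only [hsum, Finset.sum_apply, hsmul, Pi.smul_apply, smul_eq_mul, dotProduct]

theorem posSemidef_secondMoment_sub_of_condExp_ae_eq [IsFiniteMeasure μ] {Y W : Ω → ι → ℝ}
    (hY : ∀ i, MemLp (Y · i) 2 μ) (hW : ∀ i, μ[(Y · i)|m] =ᵐ[μ] (W · i)) :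
    (secondMoment μ Y - secondMoment μ W).PosSemidef := by
  have hW2 : ∀ i, MemLp (W · i) 2 μ := fun i => ((hY i).condExp one_le_two).ae_eq (hW i)
  refine PosSemidef.of_dotProduct_mulVec_nonneg
    ((secondMoment_isHermitian Y).sub (secondMoment_isHermitian W)) fun v => ?_
  have hproj : μ[fun ω => v ⬝ᵥ Y ω|m] =ᵐ[μ] fun ω => v ⬝ᵥ W ω := by
    filter_upwards [condExp_dotProduct (fun i => (hY i).integrable one_le_two) v,
      ae_all_iff.2 hW] with ω hdot hcomp
    exact hdot.trans (congrArg (v ⬝ᵥ ·) (funext hcomp))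
  have hjensen : ∫ ω, (v ⬝ᵥ W ω) ^ 2 ∂μ ≤ ∫ ω, (v ⬝ᵥ Y ω) ^ 2 ∂μ := by
    refine (integral_congr_ae (hproj.fun_comp (· ^ 2))).symm.trans_le ?_
    exact integral_sq_condExp_le
      (memLp_finsetSum _ fun i _ => (hY i).const_mul (v i)).integrable_sq
  rw [star_trivial, sub_mulVec, dotProduct_sub, dotProduct_secondMoment_mulVec_self hY,
    dotProduct_secondMoment_mulVec_self hW2]
  linarith

end SecondMoment

section SpectralNorm

variable {d : ℕ}

theorem specNorm_le_one_of_posSemidef_one_sub {A : Matrix (Fin d) (Fin d) ℝ}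
    (h : (1 - Aᵀ * A).PosSemidef) : specNorm A ≤ 1 := by
  refine ContinuousLinearMap.opNorm_le_bound _ zero_le_one fun x => ?_
  have hcontract : (A *ᵥ x) ⬝ᵥ (A *ᵥ x) ≤ x ⬝ᵥ x := by
    have := h.dotProduct_mulVec_nonneg x
    rwa [star_trivial, sub_mulVec, one_mulVec, dotProduct_sub, ← mulVec_mulVec,
      dotProduct_mulVec, vecMul_transpose, sub_nonneg] at this
  rw [one_mul, ← sq_le_sq₀ (norm_nonneg _) (norm_nonneg _), EuclideanSpace.norm_sq_eq,
    EuclideanSpace.norm_sq_eq]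
  simpa [dotProduct, sq] using hcontract

theorem transpose_msqrt (A : Matrix (Fin d) (Fin d) ℝ) : (msqrt A)ᵀ = msqrt A := by
  unfold msqrt
  split_ifs
  · rw [star_eq_conjTranspose, conjTranspose_eq_transpose_of_trivial, transpose_mul,
      transpose_mul, transpose_transpose, diagonal_transpose, Matrix.mul_assoc]
  · exact transpose_zero

theorem msqrt_mul_self {A : Matrix (Fin d) (Fin d) ℝ} (hA : A.PosSemidef) :
    msqrt A * msqrt A = A := by
  have hUU : (star hA.1.eigenvectorUnitary : Matrix (Fin d) (Fin d) ℝ) *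
      (hA.1.eigenvectorUnitary : Matrix (Fin d) (Fin d) ℝ) = 1 := Unitary.coe_star_mul_self _
  have hDD : diagonal (fun i => √(hA.1.eigenvalues i)) *
      diagonal (fun i => √(hA.1.eigenvalues i)) =
      diagonal (RCLike.ofReal ∘ hA.1.eigenvalues) := by
    rw [diagonal_mul_diagonal]
    congr with i
    simp [Real.mul_self_sqrt (hA.eigenvalues_nonneg i)]
  rw [msqrt, dif_pos hA]
  conv_rhs => rw [hA.1.spectral_theorem, Unitary.conjStarAlgAut_apply]
  simp only [Matrix.mul_assoc]
  rw [← Matrix.mul_assoc (star _ : Matrix (Fin d) (Fin d) ℝ) _ (diagonal _ * _), hUU,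
    Matrix.one_mul, ← Matrix.mul_assoc (diagonal _) (diagonal _), hDD]

theorem specNorm_msqrt_mul_mul_inv_msqrt_le_one {P Q M : Matrix (Fin d) (Fin d) ℝ}
    (hP : P.PosSemidef) (hQ : Q.PosDef) (h : (Q - Mᵀ * P * M).PosSemidef) :
    specNorm (msqrt P * M * (msqrt Q)⁻¹) ≤ 1 := by
  set T := msqrt Q
  have hTT : T * T = Q := msqrt_mul_self hQ.posSemidef
  have hT : IsUnit T.det := isUnit_of_mul_isUnit_left <| by
    rw [← det_mul, hTT, ← isUnit_iff_isUnit_det]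
    exact hQ.isUnit
  have hTinv : T⁻¹ᵀ = T⁻¹ := by rw [transpose_nonsing_inv, transpose_msqrt]
  apply specNorm_le_one_of_posSemidef_one_sub
  convert h.conjTranspose_mul_mul_same T⁻¹ using 1
  conv_rhs => rw [← hTT, ← msqrt_mul_self hP]
  rw [conjTranspose_eq_transpose_of_trivial, Matrix.mul_sub, Matrix.sub_mul]
  simp only [transpose_mul, transpose_msqrt, hTinv, Matrix.mul_assoc, mul_nonsing_inv T hT,
    Matrix.mul_one, nonsing_inv_mul T hT]

end SpectralNorm

theorem conditional_expectation_second_moment_domination_general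
    {Ω : Type*} [m0 : MeasurableSpace Ω] (μ : Measure Ω) [IsProbabilityMeasure μ]
    {d : ℕ} (mG : MeasurableSpace Ω)
    (X Y : Ω → Fin d → ℝ)
    (hX2 : ∀ i, MemLp (fun ω => X ω i) 2 μ)
    (hY2 : ∀ i, MemLp (fun ω => Y ω i) 2 μ)
    (M : Matrix (Fin d) (Fin d) ℝ)
    (hcond : ∀ i, μ[fun ω => Y ω i | mG] =ᵐ[μ] fun ω => (Mᵀ *ᵥ X ω) i) :
    ((Matrix.of fun i j => ∫ ω, Y ω i * Y ω j ∂μ)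
        - Mᵀ * (Matrix.of fun i j => ∫ ω, X ω i * X ω j ∂μ) * M).PosSemidef ∧
      ((Matrix.of fun i j => ∫ ω, X ω i * X ω j ∂μ : Matrix (Fin d) (Fin d) ℝ).PosDef →
        (Matrix.of fun i j => ∫ ω, Y ω i * Y ω j ∂μ : Matrix (Fin d) (Fin d) ℝ).PosDef →
        specNorm (msqrt (Matrix.of fun i j => ∫ ω, X ω i * X ω j ∂μ) * M *
            (msqrt (Matrix.of fun i j => ∫ ω, Y ω i * Y ω j ∂μ))⁻¹) ≤ 1) := by
  have hdom := posSemidef_secondMoment_sub_of_condExp_ae_eq (W := fun ω => Mᵀ *ᵥ X ω) hY2 hcond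
  rw [secondMoment_mulVec hX2, transpose_transpose] at hdom
  exact ⟨hdom, fun hX hY => specNorm_msqrt_mul_mul_inv_msqrt_le_one hX.posSemidef hY hdom⟩

theorem conditional_expectation_second_moment_domination
    {Ω : Type*} [m0 : MeasurableSpace Ω] (μ : Measure Ω) [IsProbabilityMeasure μ]
    {d : ℕ} (mG : MeasurableSpace Ω) (hmG : mG ≤ m0)
    (X Y : Ω → Fin d → ℝ)
    (hXmeas : ∀ i, Measurable[mG] fun ω => X ω i)
    (hX2 : ∀ i, MemLp (fun ω => X ω i) 2 μ)
    (hY2 : ∀ i, MemLp (fun ω => Y ω i) 2 μ)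
    (M : Matrix (Fin d) (Fin d) ℝ)
    (hcond : ∀ i, μ[fun ω => Y ω i | mG] =ᵐ[μ] fun ω => (Mᵀ *ᵥ X ω) i) :
    ((Matrix.of fun i j => ∫ ω, Y ω i * Y ω j ∂μ)
        - Mᵀ * (Matrix.of fun i j => ∫ ω, X ω i * X ω j ∂μ) * M).PosSemidef ∧
      ((Matrix.of fun i j => ∫ ω, X ω i * X ω j ∂μ : Matrix (Fin d) (Fin d) ℝ).PosDef →
        (Matrix.of fun i j => ∫ ω, Y ω i * Y ω j ∂μ : Matrix (Fin d) (Fin d) ℝ).PosDef →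
        specNorm (msqrt (Matrix.of fun i j => ∫ ω, X ω i * X ω j ∂μ) * M *
            (msqrt (Matrix.of fun i j => ∫ ω, Y ω i * Y ω j ∂μ))⁻¹) ≤ 1) :=
  conditional_expectation_second_moment_domination_general (m0 := m0) μ mG X Y hX2 hY2 M hcond
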